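/- Let (A,≻,≺) be a dendriform algebra and ħ ∈ K a fixed scalar. Define x∗_ħ y = ħ(x≻y − y≺x). Then (A,≻,≺,∗_ħ) is a coherent noncommutative pre-Poisson algebra. -/
import Mathlib


open LinearMap Module

/-- `(A, succ, prec)` is a dendriform algebra. -/
def IsDendriform (K : Type*) [Field K] {A : Type*} [AddCommGroup A] [Module K A]
    (succ prec : A →ₗ[K] A →ₗ[K] A) : Prop :=
  (∀ x y z, prec (prec x y) z = prec x (succ y z + prec y z)) ∧
  (∀ x y z, prec (succ x y) z = succ x (prec y z)) ∧
  (∀ x y z, succ x (succ y z) = succ (succ x y + prec x y) z)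

/-- `(A, ast)` is a pre-Lie algebra. -/
def IsPreLie (K : Type*) [Field K] {A : Type*} [AddCommGroup A] [Module K A]
    (ast : A →ₗ[K] A →ₗ[K] A) : Prop :=
  ∀ x y z, ast (ast x y) z - ast x (ast y z) = ast (ast y x) z - ast y (ast x z)

/-- `(A, succ, prec, ast)` is a noncommutative pre-Poisson algebra. -/
def IsNCPrePoisson (K : Type*) [Field K] {A : Type*} [AddCommGroup A] [Module K A]
    (succ prec ast : A →ₗ[K] A →ₗ[K] A) : Prop :=
  IsDendriform K succ prec ∧ IsPreLie K ast ∧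
  (∀ x y z, succ (ast x y - ast y x) z = ast x (succ y z) - succ y (ast x z)) ∧
  (∀ x y z, prec x (ast y z - ast z y) = ast y (prec x z) - prec (ast y x) z) ∧
  (∀ x y z, ast (succ x y + prec x y) z = prec (ast x z) y + succ x (ast y z))

/-- A noncommutative pre-Poisson algebra is coherent if
`(x≻y + x≺y)∗z = x∗(y≻z) + y∗(z≺x)`. -/
def IsCoherentNCPrePoisson (K : Type*) [Field K] {A : Type*} [AddCommGroup A]
    [Module K A] (succ prec ast : A →ₗ[K] A →ₗ[K] A) : Prop :=
  IsNCPrePoisson K succ prec ast ∧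
  (∀ x y z, ast (succ x y + prec x y) z = ast x (succ y z) + ast y (prec z x))

/-- a dendriform algebra `(A, ≻, ≺)` with the pre-Lie operation
`x∗_ħy = ħ(x≻y - y≺x)` is a coherent noncommutative pre-Poisson algebra. -/
theorem dendriform_gives_coherent_prePoisson {K A : Type*} [Field K]
    [CharZero K] [AddCommGroup A] [Module K A]
    (succ prec : A →ₗ[K] A →ₗ[K] A)
    (h : IsDendriform K succ prec) (hbar : K) :
    IsCoherentNCPrePoisson K succ prec (hbar • (succ - prec.flip)) := by
  obtain ⟨h1, h2, h3⟩ := h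
  have h1' : ∀ x y z, prec (prec x y) z = prec x (succ y z) + prec x (prec y z) := by
    intro x y z; rw [h1]; simp [map_add]
  have h3' : ∀ x y z, succ (succ x y) z = succ x (succ y z) - succ (prec x y) z := by
    intro x y z; rw [h3]; simp [map_add]
  refine ⟨⟨⟨h1, h2, h3⟩, ?_, ?_, ?_, ?_⟩, ?_⟩ <;>
    intro x y z <;>
    simp only [LinearMap.smul_apply, LinearMap.sub_apply, LinearMap.flip_apply,
      map_smul, map_sub, map_add, smul_sub, smul_add, LinearMap.add_apply,
      h1', h2, h3', smul_smul] <;>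
    module
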